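/- For t > 0 the map t ↦ C_λ(τ/t + t − s) + s (with C_λ the clip to [−λ,λ], τ > 0, s ∈ ℝ, λ > 0) restricted to t ∈ [α, β] with 0 < α ≤ β and τ < α² is a contraction with Lipschitz constant max(|1 − τ/α²|, |1 − τ/β²|) < 1 (the scalar, p=1 case of G-AMA convergence). -/

import Mathlib

/-!
Clipping and translation are nonexpansive, and the difference quotient of `t ↦ τ / t + t` at
`t₁, t₂` is `1 - τ / (t₁ t₂)` with `t₁ t₂ ∈ [α², β²]`; it lies strictly between `-1` and `1`
as soon as `0 < τ < 2 α²`.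
-/

/-- Clip operator. -/
noncomputable def clip (l x : ℝ) : ℝ := min (max x (-l)) l

open Set

theorem abs_clip_sub_clip_le (l a b : ℝ) : |clip l a - clip l b| ≤ |a - b| :=
  calc |min (max a (-l)) l - min (max b (-l)) l|
      ≤ max |max a (-l) - max b (-l)| |l - l| := abs_min_sub_min_le_max _ _ _ _
    _ = |max a (-l) - max b (-l)| := by simp
    _ ≤ |a - b| := abs_max_sub_max_le_abs _ _ _

theorem div_add_self_sub_div_add_self {x y : ℝ} (τ : ℝ) (hx : x ≠ 0) (hy : y ≠ 0) :
    τ / x + x - (τ / y + y) = (1 - τ / (x * y)) * (x - y) := by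
  field_simp
  ring

/-- `u ↦ 1 - τ / u` is monotone on `(0, ∞)` (increasing or decreasing according to the sign
of `τ`), so on `[a, b]` its absolute value peaks at an endpoint. -/
theorem abs_one_sub_div_le_max_of_mem_Icc {a b u : ℝ} (τ : ℝ) (ha : 0 < a) (hu : u ∈ Icc a b) :
    |1 - τ / u| ≤ max |1 - τ / a| |1 - τ / b| := by
  obtain ⟨hau, hub⟩ := hu
  have hu0 : 0 < u := ha.trans_le hau
  rcases le_total 0 τ with hτ | hτ
  · exact abs_le_max_abs_abs (by gcongr) (by gcongr)
  · have hbu : -τ / b ≤ -τ / u := by gcongr; exact neg_nonneg.2 hτ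
    have hua : -τ / u ≤ -τ / a := by gcongr; exact neg_nonneg.2 hτ
    rw [neg_div, neg_div, neg_le_neg_iff] at hbu hua
    rw [max_comm]
    exact abs_le_max_abs_abs (sub_le_sub_left hbu 1) (sub_le_sub_left hua 1)

theorem abs_div_add_self_sub_div_add_self_le {α β t₁ t₂ : ℝ} (τ : ℝ) (hα : 0 < α)
    (h₁ : t₁ ∈ Icc α β) (h₂ : t₂ ∈ Icc α β) :
    |τ / t₁ + t₁ - (τ / t₂ + t₂)| ≤ max |1 - τ / α ^ 2| |1 - τ / β ^ 2| * |t₁ - t₂| := by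
  have ht₁ : 0 < t₁ := hα.trans_le h₁.1
  have ht₂ : 0 < t₂ := hα.trans_le h₂.1
  have hprod : t₁ * t₂ ∈ Icc (α ^ 2) (β ^ 2) := by
    rw [sq, sq]
    exact ⟨mul_le_mul h₁.1 h₂.1 hα.le ht₁.le,
      mul_le_mul h₁.2 h₂.2 ht₂.le (ht₁.le.trans h₁.2)⟩
  rw [div_add_self_sub_div_add_self τ ht₁.ne' ht₂.ne', abs_mul]
  gcongr
  exact abs_one_sub_div_le_max_of_mem_Icc τ (by positivity) hprod

theorem abs_one_sub_div_lt_one {a τ : ℝ} (ha : 0 < a) (hτ0 : 0 < τ) (hτ : τ < 2 * a) :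
    |1 - τ / a| < 1 := by
  rw [abs_sub_lt_iff]
  constructor
  · linarith [div_pos hτ0 ha]
  · linarith [(div_lt_iff₀ ha).2 hτ]

theorem scalar_gama_contraction_general (l τ s α β : ℝ) (hτ0 : 0 < τ)
    (hα : 0 < α) (hαβ : α ≤ β) (hτ : τ < α ^ 2) :
    (∀ t₁ ∈ Set.Icc α β, ∀ t₂ ∈ Set.Icc α β,
      |(clip l (τ / t₁ + t₁ - s) + s) - (clip l (τ / t₂ + t₂ - s) + s)| ≤
        max |1 - τ / α ^ 2| |1 - τ / β ^ 2| * |t₁ - t₂|) ∧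
    max |1 - τ / α ^ 2| |1 - τ / β ^ 2| < 1 := by
  refine ⟨fun t₁ h₁ t₂ h₂ => ?_, ?_⟩
  · calc |(clip l (τ / t₁ + t₁ - s) + s) - (clip l (τ / t₂ + t₂ - s) + s)|
        = |clip l (τ / t₁ + t₁ - s) - clip l (τ / t₂ + t₂ - s)| := by
          rw [add_sub_add_right_eq_sub]
      _ ≤ |τ / t₁ + t₁ - s - (τ / t₂ + t₂ - s)| := abs_clip_sub_clip_le _ _ _
      _ = |τ / t₁ + t₁ - (τ / t₂ + t₂)| := by rw [sub_sub_sub_cancel_right]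
      _ ≤ _ := abs_div_add_self_sub_div_add_self_le τ hα h₁ h₂
  · have hα2 : 0 < α ^ 2 := by positivity
    have hαβ2 : α ^ 2 ≤ β ^ 2 := pow_le_pow_left₀ hα.le hαβ 2
    exact max_lt (abs_one_sub_div_lt_one hα2 hτ0 (by linarith))
      (abs_one_sub_div_lt_one (hα2.trans_le hαβ2) hτ0 (by linarith))

theorem scalar_gama_contraction (l τ s α β : ℝ) (hl : 0 < l) (hτ0 : 0 < τ)
    (hα : 0 < α) (hαβ : α ≤ β) (hτ : τ < α ^ 2) :
    (∀ t₁ ∈ Set.Icc α β, ∀ t₂ ∈ Set.Icc α β,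
      |(clip l (τ / t₁ + t₁ - s) + s) - (clip l (τ / t₂ + t₂ - s) + s)| ≤
        max |1 - τ / α ^ 2| |1 - τ / β ^ 2| * |t₁ - t₂|) ∧
    max |1 - τ / α ^ 2| |1 - τ / β ^ 2| < 1 :=
  scalar_gama_contraction_general l τ s α β hτ0 hα hαβ hτ
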